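/- Let n ≥ 2 and let p₀ : ℝⁿ ∖ {0} → ℂ be continuous and positively homogeneous of degree zero (p₀(rξ) = p₀(ξ) for all r > 0 and ξ ≠ 0), and assume p₀(0,…,0,1) = p₀(0,…,0,−1). Write ξ = (ξ′, ξₙ) ∈ ℝ^{n−1} × ℝ. Then: (i) for each ξ′ ≠ 0 the function ξₙ ↦ p₀(ξ′, ξₙ) is admissible; (ii) ‖p₀(ξ′,·)(D)₊‖ = sup_{ξₙ∈ℝ} |p₀(ξ′, ξₙ)|, and this quantity is independent of |ξ′|, i.e. ‖p₀(sξ′,·)(D)₊‖ = ‖p₀(ξ′,·)(D)₊‖ for all s > 0; (iii) sup_{ξ′≠0} ‖p₀(ξ′,·)(D)₊‖ = sup_{ξ≠0} |p₀(ξ)|. -/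

import Mathlib

/-! Restricting to `(0, ∞)` is a contraction and `F` is unitary, so `‖b(D)₊‖ ≤ sup |b|`.
Conversely, the wave packet `ψ = e^{iξ₀t} 𝟙_{(0,R]}` has `‖ψ‖² = R` while `|Fψ(ξ)|² ≲ |ξ - ξ₀|⁻²`,
so all but an `O(1)` part of the mass of `|Fψ|²` lies near `ξ₀`; hence
`⟪ψ, b(D)₊ψ⟫ = ∫ b |Fψ|² = b(ξ₀) R + o(R)` for `b` continuous at `ξ₀`, and `|b(ξ₀)| ≤ ‖b(D)₊‖`.
For a homogeneous symbol, the slice `p₀(ξ', ·)` tends to `p₀(0, ±1)` at `±∞`, replacing `ξ'` by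
`sξ'` rescales the slice variable, and the values on the axis `ξ' = 0` are limits of slice values,
so the suprema over slices exhaust the supremum over all `ξ ≠ 0`. -/

open MeasureTheory Filter

noncomputable section

abbrev L2R : Type := Lp ℂ 2 (volume : Measure ℝ)
abbrev L2pos : Type := Lp ℂ 2 ((volume : Measure ℝ).restrict (Set.Ioi (0:ℝ)))

def extendZero (ψ : L2pos) : L2R :=
  MemLp.toLp (Set.indicator (Set.Ioi (0:ℝ)) ψ)
    ((memLp_indicator_iff_restrict measurableSet_Ioi).2 (Lp.memLp ψ))

def restrictPos (h : L2R) : L2pos :=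
  MemLp.toLp (⇑h) ((Lp.memLp h).restrict _)

def FourierConvention (F : L2R ≃ₗᵢ[ℂ] L2R) : Prop :=
  ∀ h : L2R, Integrable (⇑h) volume →
    (⇑(F h) : ℝ → ℂ) =ᵐ[volume]
      fun t : ℝ => ((Real.sqrt (2 * Real.pi) : ℂ))⁻¹ *
        ∫ ξ : ℝ, Complex.exp (-((t * ξ : ℝ) : ℂ) * Complex.I) * h ξ

def IsTruncMult (F : L2R ≃ₗᵢ[ℂ] L2R) (b : ℝ → ℂ) (T : L2pos →L[ℂ] L2pos) : Prop :=
  ∀ ψ : L2pos, ∃ g : L2R,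
    (⇑g : ℝ → ℂ) =ᵐ[volume] (fun t : ℝ => b t * (F (extendZero ψ)) t) ∧
    T ψ = restrictPos (F.symm g)

def Admissible (p : ℝ → ℂ) : Prop :=
  Continuous p ∧ ∃ c : ℂ, Tendsto p atTop (nhds c) ∧ Tendsto p atBot (nhds c)

open scoped ENNReal

lemma coeFn_extendZero (ψ : L2pos) :
    ⇑(extendZero ψ) =ᵐ[volume] Set.indicator (Set.Ioi 0) ⇑ψ :=
  MemLp.coeFn_toLp _

lemma coeFn_restrictPos (h : L2R) :
    ⇑(restrictPos h) =ᵐ[volume.restrict (Set.Ioi 0)] ⇑h :=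
  MemLp.coeFn_toLp _

lemma extendZero_congr {ψ : L2pos} {f : ℝ → ℂ} (h : ⇑ψ =ᵐ[volume.restrict (Set.Ioi 0)] f) :
    ⇑(extendZero ψ) =ᵐ[volume] Set.indicator (Set.Ioi 0) f :=
  (coeFn_extendZero ψ).trans ((ae_eq_restrict_iff_indicator_ae_eq measurableSet_Ioi).1 h)

lemma norm_extendZero (ψ : L2pos) : ‖extendZero ψ‖ = ‖ψ‖ := by
  rw [extendZero, Lp.norm_toLp, eLpNorm_indicator_eq_eLpNorm_restrict measurableSet_Ioi,
    ← Lp.norm_def]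

def extendZeroₗᵢ : L2pos →ₗᵢ[ℂ] L2R where
  toFun := extendZero
  map_add' ψ φ := by
    refine Lp.ext ((extendZero_congr (Lp.coeFn_add ψ φ)).trans ?_)
    filter_upwards [Lp.coeFn_add (extendZero ψ) (extendZero φ), coeFn_extendZero ψ,
      coeFn_extendZero φ] with x hx hψ hφ
    rw [hx, Pi.add_apply, hψ, hφ, Set.indicator_add', Pi.add_apply]
  map_smul' c ψ := by
    refine Lp.ext ((extendZero_congr (Lp.coeFn_smul c ψ)).trans ?_)
    filter_upwards [Lp.coeFn_smul c (extendZero ψ), coeFn_extendZero ψ] with x hx hψ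
    rw [RingHom.id_apply, hx, Pi.smul_apply, hψ]
    exact Set.indicator_const_smul_apply _ c _ x
  norm_map' := norm_extendZero

lemma norm_restrictPos_le (h : L2R) : ‖restrictPos h‖ ≤ ‖h‖ :=
  norm_Lp_toLp_restrict_le _ h

lemma inner_extendZero_left (ψ : L2pos) (h : L2R) :
    inner ℂ (extendZero ψ) h = inner ℂ ψ (restrictPos h) := by
  rw [L2.inner_def, L2.inner_def]
  calc ∫ x, inner ℂ (extendZero ψ x) (h x)
      = ∫ x, Set.indicator (Set.Ioi 0) (fun x => inner ℂ (ψ x) (h x)) x := by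
        refine integral_congr_ae ?_
        filter_upwards [coeFn_extendZero ψ] with x hx
        by_cases hx0 : x ∈ Set.Ioi 0 <;> simp [hx, hx0]
    _ = ∫ x in Set.Ioi 0, inner ℂ (ψ x) (restrictPos h x) := by
        rw [integral_indicator measurableSet_Ioi]
        refine integral_congr_ae ?_
        filter_upwards [coeFn_restrictPos h] with x hx
        rw [hx]

lemma integral_norm_sq_eq_norm_sq {α E : Type*} [MeasurableSpace α] {μ : Measure α}
    [NormedAddCommGroup E] [InnerProductSpace ℂ E] (u : Lp E 2 μ) :
    ∫ x, ‖u x‖ ^ 2 ∂μ = ‖u‖ ^ 2 := by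
  have h := L2.inner_def (𝕜 := ℂ) u u
  simp only [inner_self_eq_norm_sq_to_K] at h
  norm_cast at h
  exact h.symm

section TruncMult

variable (F : L2R ≃ₗᵢ[ℂ] L2R)

lemma opNorm_le_of_isTruncMult {b : ℝ → ℂ} {M : ℝ} (hM : ∀ x, ‖b x‖ ≤ M)
    {T : L2pos →L[ℂ] L2pos} (hT : IsTruncMult F b T) : ‖T‖ ≤ M := by
  refine T.opNorm_le_bound ((norm_nonneg _).trans (hM 0)) fun ψ => ?_
  obtain ⟨g, hg, hTψ⟩ := hT ψ
  have hgb : ‖g‖ ≤ M * ‖F (extendZero ψ)‖ := Lp.norm_le_mul_norm_of_ae_le_mul <| by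
    filter_upwards [hg] with x hx
    rw [hx, norm_mul]
    exact mul_le_mul_of_nonneg_right (hM x) (norm_nonneg _)
  calc ‖T ψ‖ ≤ ‖F.symm g‖ := hTψ ▸ norm_restrictPos_le _
    _ = ‖g‖ := F.symm.norm_map g
    _ ≤ M * ‖F (extendZero ψ)‖ := hgb
    _ = M * ‖ψ‖ := by rw [F.norm_map, norm_extendZero]

def truncMultOp {b : ℝ → ℂ} (hb : MemLp b ∞ volume) : L2pos →L[ℂ] L2pos :=
  LpToLpRestrictCLM ℝ ℂ ℂ volume 2 (Set.Ioi 0) ∘L (F.symm : L2R →L[ℂ] L2R) ∘L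
    (ContinuousLinearMap.mul ℂ ℂ).holderL volume ∞ 2 2 (hb.toLp b) ∘L
    (F : L2R →L[ℂ] L2R) ∘L extendZeroₗᵢ.toContinuousLinearMap

lemma isTruncMult_truncMultOp {b : ℝ → ℂ} (hb : MemLp b ∞ volume) :
    IsTruncMult F b (truncMultOp F hb) := by
  refine fun ψ => ⟨_, ?_, rfl⟩
  filter_upwards [ContinuousLinearMap.coeFn_holder (r := 2) (ContinuousLinearMap.mul ℂ ℂ)
    (hb.toLp b) (F (extendZero ψ)), hb.coeFn_toLp] with x hx hbx
  rw [ContinuousLinearMap.mul_apply', hbx] at hx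
  exact hx

lemma inner_apply_self_of_isTruncMult {b : ℝ → ℂ} {T : L2pos →L[ℂ] L2pos}
    (hT : IsTruncMult F b T) (ψ : L2pos) :
    inner ℂ ψ (T ψ) = ∫ x, b x * ((‖F (extendZero ψ) x‖ ^ 2 : ℝ) : ℂ) := by
  obtain ⟨g, hg, hTψ⟩ := hT ψ
  rw [hTψ, ← inner_extendZero_left, ← F.inner_map_map, F.apply_symm_apply, L2.inner_def]
  refine integral_congr_ae ?_
  filter_upwards [hg] with x hx
  rw [hx, RCLike.inner_apply', mul_left_comm, Complex.conj_mul', Complex.ofReal_pow]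

end TruncMult

lemma inv_sq_add_sub_sq_eq {δ : ℝ} (hδ : δ ≠ 0) (ξ₀ x : ℝ) :
    (δ ^ 2 + (x - ξ₀) ^ 2)⁻¹ = (δ ^ 2)⁻¹ * (1 + ((x - ξ₀) / δ) ^ 2)⁻¹ := by
  field_simp

lemma integrable_inv_sq_add_sub_sq {δ : ℝ} (hδ : δ ≠ 0) (ξ₀ : ℝ) :
    Integrable fun x : ℝ => (δ ^ 2 + (x - ξ₀) ^ 2)⁻¹ := by
  simp_rw [inv_sq_add_sub_sq_eq hδ]
  exact ((integrable_inv_one_add_sq.comp_div hδ).comp_sub_right ξ₀).const_mul _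

lemma integral_inv_sq_add_sub_sq {δ : ℝ} (hδ : 0 < δ) (ξ₀ : ℝ) :
    ∫ x : ℝ, (δ ^ 2 + (x - ξ₀) ^ 2)⁻¹ = Real.pi / δ := by
  simp_rw [inv_sq_add_sub_sq_eq hδ.ne']
  rw [integral_const_mul, integral_sub_right_eq_self (fun y => (1 + (y / δ) ^ 2)⁻¹),
    Measure.integral_comp_div (fun y => (1 + y ^ 2)⁻¹), integral_univ_inv_one_add_sq,
    abs_of_pos hδ, smul_eq_mul]
  field_simp

lemma norm_integral_mul_sub_le {b : ℝ → ℂ} (hb : AEStronglyMeasurable b volume) {M : ℝ}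
    (hM : ∀ x, ‖b x‖ ≤ M) {w : ℝ → ℝ} (hw0 : ∀ x, 0 ≤ w x) (hw : Integrable w)
    {ξ₀ δ ε A : ℝ} (hδ : 0 < δ) (hA : 0 ≤ A)
    (hnear : ∀ x, |x - ξ₀| < δ → ‖b x - b ξ₀‖ ≤ ε)
    (hfar : ∀ᵐ x, δ ≤ |x - ξ₀| → w x ≤ A / (x - ξ₀) ^ 2) :
    ‖(∫ x, b x * w x) - b ξ₀ * ↑(∫ x, w x)‖ ≤ ε * (∫ x, w x) + 4 * Real.pi * M * A / δ := by
  have hε : 0 ≤ ε := by simpa using hnear ξ₀ (by simpa using hδ)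
  have hM0 : 0 ≤ M := (norm_nonneg _).trans (hM 0)
  have hwC : Integrable fun x => (w x : ℂ) := hw.ofReal
  have hsub : (∫ x, b x * w x) - b ξ₀ * ↑(∫ x, w x) = ∫ x, (b x - b ξ₀) * w x := by
    simp_rw [sub_mul]
    rw [integral_sub (hwC.bdd_mul hb (ae_of_all _ hM)) (hwC.const_mul _), integral_const_mul,
      integral_complex_ofReal]
  have hpt : ∀ᵐ x, ‖(b x - b ξ₀) * w x‖
      ≤ ε * w x + 4 * M * A * (δ ^ 2 + (x - ξ₀) ^ 2)⁻¹ := by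
    filter_upwards [hfar] with x hx
    rw [norm_mul, Complex.norm_real, Real.norm_of_nonneg (hw0 x)]
    rcases lt_or_ge |x - ξ₀| δ with hlt | hge
    · have := mul_le_mul_of_nonneg_right (hnear x hlt) (hw0 x)
      have : 0 ≤ 4 * M * A * (δ ^ 2 + (x - ξ₀) ^ 2)⁻¹ := by positivity
      linarith
    · have hb2 : ‖b x - b ξ₀‖ ≤ 2 * M := (norm_sub_le _ _).trans (by linarith [hM x, hM ξ₀])
      have hsq : δ ^ 2 ≤ (x - ξ₀) ^ 2 := by
        rw [← sq_abs (x - ξ₀)]; exact pow_le_pow_left₀ hδ.le hge 2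
      -- far from `ξ₀`, `A / (x - ξ₀)²` is dominated by a Lorentzian, integrable on all of `ℝ`
      have hw2 : w x ≤ 2 * A * (δ ^ 2 + (x - ξ₀) ^ 2)⁻¹ := by
        refine (hx hge).trans ?_
        rw [← div_eq_mul_inv, div_le_div_iff₀ ((pow_pos hδ 2).trans_le hsq) (by positivity)]
        nlinarith
      have := mul_le_mul hb2 hw2 (hw0 x) (by positivity)
      nlinarith [mul_nonneg hε (hw0 x)]
  rw [hsub]
  refine (norm_integral_le_integral_norm _).trans ((integral_mono_of_nonneg
    (ae_of_all _ fun x => norm_nonneg _) ((hw.const_mul ε).add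
      ((integrable_inv_sq_add_sub_sq hδ.ne' ξ₀).const_mul _)) hpt).trans (le_of_eq ?_))
  simp only [Pi.add_apply]
  rw [integral_add (hw.const_mul ε) ((integrable_inv_sq_add_sub_sq hδ.ne' ξ₀).const_mul _),
    integral_const_mul, integral_const_mul, integral_inv_sq_add_sub_sq hδ]
  ring

def wavePacket (ξ₀ R : ℝ) : ℝ → ℂ :=
  Set.indicator (Set.Ioc 0 R) fun t => Complex.exp (↑(ξ₀ * t) * Complex.I)

lemma norm_sq_wavePacket (ξ₀ R t : ℝ) :
    ‖wavePacket ξ₀ R t‖ ^ 2 = Set.indicator (Set.Ioc 0 R) 1 t := by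
  by_cases ht : t ∈ Set.Ioc 0 R
  · rw [wavePacket, Set.indicator_of_mem ht, Set.indicator_of_mem ht,
      Complex.norm_exp_ofReal_mul_I, one_pow, Pi.one_apply]
  · simp [wavePacket, ht]

lemma integrable_wavePacket (ξ₀ R : ℝ) : Integrable (wavePacket ξ₀ R) :=
  (Continuous.integrableOn_Ioc (by fun_prop)).integrable_indicator measurableSet_Ioc

lemma memLp_wavePacket (ξ₀ R : ℝ) : MemLp (wavePacket ξ₀ R) 2 :=
  (memLp_indicator_iff_restrict measurableSet_Ioc).2 <|
    MemLp.of_bound (Continuous.aestronglyMeasurable (by fun_prop)) 1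
      (ae_of_all _ fun t => (Complex.norm_exp_ofReal_mul_I _).le)

lemma fourierIntegral_wavePacket {ξ₀ R x : ℝ} (hR : 0 ≤ R) (hx : x ≠ ξ₀) :
    ∫ t, Complex.exp (-↑(x * t) * Complex.I) * wavePacket ξ₀ R t
      = (Complex.exp (Complex.I * ↑(ξ₀ - x) * R) - 1) / (Complex.I * ↑(ξ₀ - x)) := by
  have hc : Complex.I * ↑(ξ₀ - x) ≠ 0 :=
    mul_ne_zero Complex.I_ne_zero (Complex.ofReal_ne_zero.2 (sub_ne_zero.2 hx.symm))
  have hmod : (fun t => Complex.exp (-↑(x * t) * Complex.I) * wavePacket ξ₀ R t)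
      = Set.indicator (Set.Ioc 0 R) fun t : ℝ => Complex.exp (Complex.I * ↑(ξ₀ - x) * t) := by
    ext t
    by_cases ht : t ∈ Set.Ioc 0 R
    · simp only [wavePacket, Set.indicator_of_mem ht, ← Complex.exp_add]
      push_cast
      ring_nf
    · simp [wavePacket, ht]
  rw [hmod, integral_indicator measurableSet_Ioc, ← intervalIntegral.integral_of_le hR,
    integral_exp_mul_complex hc]
  simp

lemma norm_fourierIntegral_wavePacket_le {ξ₀ R x : ℝ} (hR : 0 ≤ R) (hx : x ≠ ξ₀) :
    ‖∫ t, Complex.exp (-↑(x * t) * Complex.I) * wavePacket ξ₀ R t‖ ≤ 2 / |x - ξ₀| := by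
  rw [fourierIntegral_wavePacket hR hx, norm_div, norm_mul, Complex.norm_I, one_mul,
    Complex.norm_real, Real.norm_eq_abs, abs_sub_comm]
  gcongr
  refine (norm_sub_le _ _).trans (le_of_eq ?_)
  rw [norm_one, Complex.norm_exp]
  norm_num

def wavePacketLp (ξ₀ R : ℝ) : L2pos :=
  ((memLp_wavePacket ξ₀ R).restrict _).toLp _

lemma coeFn_extendZero_wavePacketLp (ξ₀ R : ℝ) :
    ⇑(extendZero (wavePacketLp ξ₀ R)) =ᵐ[volume] wavePacket ξ₀ R := by
  refine (extendZero_congr (MemLp.coeFn_toLp _)).trans (Eventually.of_forall fun t => ?_)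
  simp only [wavePacket, Set.indicator_indicator,
    Set.inter_eq_self_of_subset_right Set.Ioc_subset_Ioi_self]

lemma norm_sq_wavePacketLp (ξ₀ : ℝ) {R : ℝ} (hR : 0 ≤ R) : ‖wavePacketLp ξ₀ R‖ ^ 2 = R := by
  rw [← norm_extendZero, ← integral_norm_sq_eq_norm_sq]
  calc ∫ t, ‖extendZero (wavePacketLp ξ₀ R) t‖ ^ 2
      = ∫ t, Set.indicator (Set.Ioc 0 R) 1 t := by
        refine integral_congr_ae ?_
        filter_upwards [coeFn_extendZero_wavePacketLp ξ₀ R] with t ht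
        rw [ht, norm_sq_wavePacket]
    _ = R := by simp [integral_indicator_one measurableSet_Ioc, hR]

lemma norm_sq_fourier_wavePacketLp_le {F : L2R ≃ₗᵢ[ℂ] L2R} (hF : FourierConvention F)
    (ξ₀ : ℝ) {R : ℝ} (hR : 0 ≤ R) :
    ∀ᵐ x, x ≠ ξ₀ → ‖F (extendZero (wavePacketLp ξ₀ R)) x‖ ^ 2 ≤ 2 / Real.pi / (x - ξ₀) ^ 2 := by
  have hψ := coeFn_extendZero_wavePacketLp ξ₀ R
  filter_upwards [hF _ ((integrable_wavePacket ξ₀ R).congr hψ.symm)] with x hx hxξ₀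
  have hint : ∫ t, Complex.exp (-↑(x * t) * Complex.I) * extendZero (wavePacketLp ξ₀ R) t
      = ∫ t, Complex.exp (-↑(x * t) * Complex.I) * wavePacket ξ₀ R t :=
    integral_congr_ae (hψ.mono fun t ht => by simp only [ht])
  have hbound := norm_fourierIntegral_wavePacket_le hR hxξ₀
  rw [hx, hint, norm_mul, norm_inv, Complex.norm_real, Real.norm_of_nonneg (Real.sqrt_nonneg _)]
  calc _ ≤ ((Real.sqrt (2 * Real.pi))⁻¹ * (2 / |x - ξ₀|)) ^ 2 := by gcongr
    _ = 2 / Real.pi / (x - ξ₀) ^ 2 := by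
      rw [mul_pow, inv_pow, Real.sq_sqrt (by positivity), div_pow, sq_abs]
      field_simp

section LowerBound

variable {F : L2R ≃ₗᵢ[ℂ] L2R} {b : ℝ → ℂ} {M : ℝ} {T : L2pos →L[ℂ] L2pos}

lemma norm_mul_le_opNorm_mul_add (hF : FourierConvention F)
    (hb : AEStronglyMeasurable b volume) (hM : ∀ x, ‖b x‖ ≤ M) (hT : IsTruncMult F b T)
    {ξ₀ δ ε : ℝ} (hδ : 0 < δ) (hnear : ∀ x, |x - ξ₀| < δ → ‖b x - b ξ₀‖ ≤ ε)
    {R : ℝ} (hR : 0 ≤ R) :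
    ‖b ξ₀‖ * R ≤ (‖T‖ + ε) * R + 8 * M / δ := by
  set ψ := wavePacketLp ξ₀ R
  set u := F (extendZero ψ)
  have hψ : ‖ψ‖ ^ 2 = R := norm_sq_wavePacketLp ξ₀ hR
  have hu : ∫ x, ‖u x‖ ^ 2 = R := by
    rw [integral_norm_sq_eq_norm_sq, F.norm_map, norm_extendZero, hψ]
  have hfar : ∀ᵐ x, δ ≤ |x - ξ₀| → ‖u x‖ ^ 2 ≤ 2 / Real.pi / (x - ξ₀) ^ 2 := by
    filter_upwards [norm_sq_fourier_wavePacketLp_le hF ξ₀ hR] with x hx hδx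
    exact hx fun h => by simp [h] at hδx; linarith
  have hconc := norm_integral_mul_sub_le hb hM (fun x => sq_nonneg ‖u x‖)
    ((Lp.memLp u).integrable_norm_pow two_ne_zero) hδ (by positivity) hnear hfar
  rw [← inner_apply_self_of_isTruncMult F hT, hu] at hconc
  have hinner : ‖inner ℂ ψ (T ψ)‖ ≤ ‖T‖ * R := by
    refine (norm_inner_le_norm _ _).trans ?_
    calc ‖ψ‖ * ‖T ψ‖ ≤ ‖ψ‖ * (‖T‖ * ‖ψ‖) := by gcongr; exact T.le_opNorm ψ
      _ = ‖T‖ * R := by rw [← hψ]; ring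
  calc ‖b ξ₀‖ * R = ‖b ξ₀ * R‖ := by rw [norm_mul, Complex.norm_real, Real.norm_of_nonneg hR]
    _ ≤ ‖inner ℂ ψ (T ψ)‖ + ‖inner ℂ ψ (T ψ) - b ξ₀ * R‖ := norm_le_norm_add_norm_sub _ _
    _ ≤ ‖T‖ * R + (ε * R + 4 * Real.pi * M * (2 / Real.pi) / δ) := add_le_add hinner hconc
    _ = (‖T‖ + ε) * R + 8 * M / δ := by field_simp; ring

lemma norm_le_opNorm_of_isTruncMult (hF : FourierConvention F)
    (hb : AEStronglyMeasurable b volume) (hM : ∀ x, ‖b x‖ ≤ M) (hT : IsTruncMult F b T)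
    {ξ₀ : ℝ} (hξ₀ : ContinuousAt b ξ₀) : ‖b ξ₀‖ ≤ ‖T‖ := by
  refine le_of_forall_pos_le_add fun ε hε => ?_
  obtain ⟨δ, hδ, hnear⟩ := Metric.continuousAt_iff.1 hξ₀ ε hε
  have hlim : Tendsto (fun R : ℝ => ‖T‖ + ε + 8 * M / δ / R) atTop (nhds (‖T‖ + ε)) := by
    simpa using tendsto_const_nhds.add
      ((tendsto_const_nhds (x := 8 * M / δ)).div_atTop tendsto_id)
  refine ge_of_tendsto hlim ?_
  filter_upwards [eventually_gt_atTop 0] with R hR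
  have := norm_mul_le_opNorm_mul_add hF hb hM hT hδ
    (fun x hx => by rw [← dist_eq_norm]; exact (hnear (by rwa [Real.dist_eq])).le) hR.le
  rw [add_div' _ _ _ hR.ne', le_div_iff₀ hR]
  linarith

lemma opNorm_eq_iSup_of_isTruncMult (hF : FourierConvention F) (hb : Continuous b)
    (hM : ∀ x, ‖b x‖ ≤ M) (hT : IsTruncMult F b T) : ‖T‖ = ⨆ x, ‖b x‖ := by
  have hbdd : BddAbove (Set.range fun x => ‖b x‖) := ⟨M, by rintro _ ⟨x, rfl⟩; exact hM x⟩
  exact le_antisymm (opNorm_le_of_isTruncMult F (le_ciSup hbdd) hT)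
    (ciSup_le fun _ => norm_le_opNorm_of_isTruncMult hF hb.aestronglyMeasurable hM hT
      hb.continuousAt)

end LowerBound

lemma prod_mk_ne_zero {A B : Type*} [Zero A] [Zero B] {a : A} (ha : a ≠ 0) (b : B) :
    (a, b) ≠ 0 :=
  fun h => ha (Prod.mk_eq_zero.1 h).1

lemma continuous_slice {E X : Type*} [TopologicalSpace E] [Zero E] [T1Space E]
    [TopologicalSpace X] {p : E × ℝ → X} (hcont : ContinuousOn p {ξ | ξ ≠ 0}) {ξ' : E}
    (hξ' : ξ' ≠ 0) : Continuous fun t : ℝ => p (ξ', t) :=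
  continuous_iff_continuousAt.2 fun t =>
    (hcont.continuousAt (isOpen_ne.mem_nhds (prod_mk_ne_zero hξ' t))).comp (by fun_prop)

section Symbol

variable {E X : Type*} [NormedAddCommGroup E] [NormedSpace ℝ E] [TopologicalSpace X]

lemma tendsto_slice_atTop {p : E × ℝ → X} (hcont : ContinuousOn p {ξ | ξ ≠ 0})
    (hhom : ∀ r : ℝ, 0 < r → ∀ ξ : E × ℝ, ξ ≠ 0 → p (r • ξ) = p ξ) {ξ' : E} (hξ' : ξ' ≠ 0) :
    Tendsto (fun t : ℝ => p (ξ', t)) atTop (nhds (p (0, 1))) := by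
  have hlim : Tendsto (fun t : ℝ => (t⁻¹ • ξ', (1 : ℝ))) atTop (nhds (0, 1)) := by
    simpa using ((tendsto_inv_atTop_zero (𝕜 := ℝ)).smul_const ξ').prodMk_nhds
      tendsto_const_nhds
  refine ((hcont.continuousAt (isOpen_ne.mem_nhds (by simp))).tendsto.comp hlim).congr' ?_
  filter_upwards [eventually_gt_atTop 0] with t ht
  have := hhom t⁻¹ (inv_pos.2 ht) (ξ', t) (prod_mk_ne_zero hξ' t)
  rwa [Prod.smul_mk, smul_eq_mul, inv_mul_cancel₀ ht.ne'] at this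

lemma tendsto_slice_atBot {p : E × ℝ → X} (hcont : ContinuousOn p {ξ | ξ ≠ 0})
    (hhom : ∀ r : ℝ, 0 < r → ∀ ξ : E × ℝ, ξ ≠ 0 → p (r • ξ) = p ξ) {ξ' : E} (hξ' : ξ' ≠ 0) :
    Tendsto (fun t : ℝ => p (ξ', t)) atBot (nhds (p (0, -1))) := by
  set q : E × ℝ → X := fun ξ => p (ξ.1, -ξ.2)
  have hq : ContinuousOn q {ξ | ξ ≠ 0} :=
    hcont.comp (by fun_prop) fun ξ hξ h => hξ (by simpa [Prod.ext_iff] using h)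
  have hqhom : ∀ r : ℝ, 0 < r → ∀ ξ : E × ℝ, ξ ≠ 0 → q (r • ξ) = q ξ := fun r hr ξ hξ => by
    simpa [q] using hhom r hr (ξ.1, -ξ.2) (by simpa [Prod.ext_iff] using hξ)
  simpa [q, Function.comp_def] using
    (tendsto_slice_atTop hq hqhom hξ').comp tendsto_neg_atBot_atTop

lemma admissible_slice {p : E × ℝ → ℂ} (hcont : ContinuousOn p {ξ | ξ ≠ 0})
    (hhom : ∀ r : ℝ, 0 < r → ∀ ξ : E × ℝ, ξ ≠ 0 → p (r • ξ) = p ξ)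
    (htrans : p (0, 1) = p (0, -1)) {ξ' : E} (hξ' : ξ' ≠ 0) :
    Admissible fun t => p (ξ', t) :=
  ⟨continuous_slice hcont hξ', p (0, 1), tendsto_slice_atTop hcont hhom hξ',
    htrans ▸ tendsto_slice_atBot hcont hhom hξ'⟩

end Symbol

section Homogeneous

variable {E : Type*} [NormedAddCommGroup E] [NormedSpace ℝ E]

lemma exists_norm_le_of_homogeneous [ProperSpace E] {p : E → ℂ}
    (hcont : ContinuousOn p {ξ | ξ ≠ 0})
    (hhom : ∀ r : ℝ, 0 < r → ∀ ξ : E, ξ ≠ 0 → p (r • ξ) = p ξ) :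
    ∃ K, ∀ ξ, ξ ≠ 0 → ‖p ξ‖ ≤ K := by
  obtain ⟨K, hK⟩ := (isCompact_sphere (0 : E) 1).exists_bound_of_continuousOn
    (hcont.mono fun ξ hξ h => by simp [h] at hξ)
  refine ⟨K, fun ξ hξ => ?_⟩
  have hr : 0 < ‖ξ‖⁻¹ := inv_pos.2 (norm_pos_iff.2 hξ)
  rw [← hhom _ hr ξ hξ]
  exact hK _ (by simp [norm_smul, hξ])

lemma apply_slice_smul {p : E × ℝ → ℂ}
    (hhom : ∀ r : ℝ, 0 < r → ∀ ξ : E × ℝ, ξ ≠ 0 → p (r • ξ) = p ξ) {s : ℝ} (hs : 0 < s)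
    {ξ' : E} (hξ' : ξ' ≠ 0) (t : ℝ) : p (s • ξ', t) = p (ξ', s⁻¹ * t) := by
  simpa [hs.ne'] using hhom s hs (ξ', s⁻¹ * t) (prod_mk_ne_zero hξ' _)

lemma iSup_norm_slice_smul {p : E × ℝ → ℂ}
    (hhom : ∀ r : ℝ, 0 < r → ∀ ξ : E × ℝ, ξ ≠ 0 → p (r • ξ) = p ξ) {s : ℝ} (hs : 0 < s)
    {ξ' : E} (hξ' : ξ' ≠ 0) : ⨆ t, ‖p (s • ξ', t)‖ = ⨆ t, ‖p (ξ', t)‖ := by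
  simp_rw [apply_slice_smul hhom hs hξ']
  exact (mul_left_surjective₀ (inv_ne_zero hs.ne')).iSup_comp fun t => ‖p (ξ', t)‖

lemma apply_zero_prod {p : E × ℝ → ℂ}
    (hhom : ∀ r : ℝ, 0 < r → ∀ ξ : E × ℝ, ξ ≠ 0 → p (r • ξ) = p ξ)
    (htrans : p (0, 1) = p (0, -1)) {t : ℝ} (ht : t ≠ 0) : p (0, t) = p (0, 1) := by
  have h := hhom |t|⁻¹ (by positivity) (0, t) (by simpa using ht)
  rw [Prod.smul_mk, smul_zero, smul_eq_mul] at h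
  rcases lt_or_gt_of_ne ht with hneg | hpos
  · rwa [abs_of_neg hneg, inv_neg, neg_mul, inv_mul_cancel₀ ht, ← htrans, eq_comm] at h
  · rwa [abs_of_pos hpos, inv_mul_cancel₀ ht, eq_comm] at h

lemma sSup_iSup_norm_slice [Nontrivial E] [ProperSpace E] {p : E × ℝ → ℂ}
    (hcont : ContinuousOn p {ξ | ξ ≠ 0})
    (hhom : ∀ r : ℝ, 0 < r → ∀ ξ : E × ℝ, ξ ≠ 0 → p (r • ξ) = p ξ)
    (htrans : p (0, 1) = p (0, -1)) :
    sSup {r | ∃ ξ' : E, ξ' ≠ 0 ∧ r = ⨆ t, ‖p (ξ', t)‖}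
      = sSup {r | ∃ ξ : E × ℝ, ξ ≠ 0 ∧ r = ‖p ξ‖} := by
  obtain ⟨K, hK⟩ := exists_norm_le_of_homogeneous hcont hhom
  obtain ⟨ξ'₀, hξ'₀⟩ := exists_ne (0 : E)
  have hslice : ∀ ξ' : E, ξ' ≠ 0 → BddAbove (Set.range fun t => ‖p (ξ', t)‖) :=
    fun ξ' hξ' => ⟨K, by rintro _ ⟨t, rfl⟩; exact hK _ (prod_mk_ne_zero hξ' t)⟩
  have hA : BddAbove {r | ∃ ξ' : E, ξ' ≠ 0 ∧ r = ⨆ t, ‖p (ξ', t)‖} := ⟨K, by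
    rintro _ ⟨ξ', hξ', rfl⟩
    exact ciSup_le fun t => hK _ (prod_mk_ne_zero hξ' t)⟩
  have hB : BddAbove {r | ∃ ξ : E × ℝ, ξ ≠ 0 ∧ r = ‖p ξ‖} := ⟨K, by
    rintro _ ⟨ξ, hξ, rfl⟩
    exact hK ξ hξ⟩
  refine le_antisymm (csSup_le ⟨_, ξ'₀, hξ'₀, rfl⟩ ?_) (csSup_le ⟨_, (0, 1), by simp, rfl⟩ ?_)
  · rintro _ ⟨ξ', hξ', rfl⟩
    exact ciSup_le fun t => le_csSup hB ⟨_, prod_mk_ne_zero hξ' t, rfl⟩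
  rintro _ ⟨⟨ξ', t⟩, hξ, rfl⟩
  by_cases hξ' : ξ' = 0
  · subst hξ'
    -- on the axis `p` takes the value `p (0, 1)`, which is the limit of every slice at `+∞`
    rw [apply_zero_prod hhom htrans fun ht => hξ (by simp [ht])]
    refine le_trans ?_ (le_csSup hA ⟨ξ'₀, hξ'₀, rfl⟩)
    exact le_of_tendsto (tendsto_slice_atTop hcont hhom hξ'₀).norm
      (Eventually.of_forall fun t => le_ciSup (hslice ξ'₀ hξ'₀) t)
  · exact (le_ciSup (hslice ξ' hξ') t).trans (le_csSup hA ⟨ξ', hξ', rfl⟩)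

end Homogeneous

/-- for a continuous zero-degree homogeneous symbol `p₀` on `ℝⁿ ∖ {0}`
(`n = k+1 ≥ 2`, coordinates `ξ = (ξ′, ξₙ)`) with `p₀(0,1) = p₀(0,−1)`:
(i) each `p₀(ξ′,·)`, `ξ′ ≠ 0`, is admissible;
(ii) `‖p₀(ξ′,·)(D)₊‖ = sup_{ξₙ} |p₀(ξ′,ξₙ)|`, and this norm is independent of `|ξ′|`;
(iii) `sup_{ξ′≠0} ‖p₀(ξ′,·)(D)₊‖ = sup_{ξ≠0} |p₀(ξ)|`. -/
theorem homogeneous_symbol_truncMult_norm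
    (F : L2R ≃ₗᵢ[ℂ] L2R) (hF : FourierConvention F)
    (k : ℕ) (hk : 1 ≤ k)
    (p₀ : EuclideanSpace ℝ (Fin k) × ℝ → ℂ)
    (hcont : ContinuousOn p₀ {ξ | ξ ≠ 0})
    (hhom : ∀ r : ℝ, 0 < r → ∀ ξ : EuclideanSpace ℝ (Fin k) × ℝ, ξ ≠ 0 →
      p₀ (r • ξ) = p₀ ξ)
    (htrans : p₀ ((0 : EuclideanSpace ℝ (Fin k)), (1:ℝ))
      = p₀ ((0 : EuclideanSpace ℝ (Fin k)), (-1:ℝ))) :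
    -- (i)
    (∀ ξ' : EuclideanSpace ℝ (Fin k), ξ' ≠ 0 →
      Admissible (fun ξn : ℝ => p₀ (ξ', ξn))) ∧
    -- (ii), first part
    (∀ ξ' : EuclideanSpace ℝ (Fin k), ξ' ≠ 0 →
      ∀ T : L2pos →L[ℂ] L2pos, IsTruncMult F (fun ξn : ℝ => p₀ (ξ', ξn)) T →
        ‖T‖ = ⨆ ξn : ℝ, ‖p₀ (ξ', ξn)‖) ∧
    -- (ii), independence of |ξ′|
    (∀ s : ℝ, 0 < s → ∀ ξ' : EuclideanSpace ℝ (Fin k), ξ' ≠ 0 →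
      ∀ T T' : L2pos →L[ℂ] L2pos,
        IsTruncMult F (fun ξn : ℝ => p₀ (ξ', ξn)) T →
        IsTruncMult F (fun ξn : ℝ => p₀ (s • ξ', ξn)) T' →
          ‖T'‖ = ‖T‖) ∧
    -- (iii)
    sSup {r : ℝ | ∃ ξ' : EuclideanSpace ℝ (Fin k), ξ' ≠ 0 ∧
        ∃ T : L2pos →L[ℂ] L2pos, IsTruncMult F (fun ξn : ℝ => p₀ (ξ', ξn)) T ∧ r = ‖T‖}
      = sSup {r : ℝ | ∃ ξ : EuclideanSpace ℝ (Fin k) × ℝ, ξ ≠ 0 ∧ r = ‖p₀ ξ‖} := by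
  obtain ⟨K, hK⟩ := exists_norm_le_of_homogeneous hcont hhom
  have hbdd : ∀ ξ' : EuclideanSpace ℝ (Fin k), ξ' ≠ 0 → ∀ t, ‖p₀ (ξ', t)‖ ≤ K :=
    fun ξ' hξ' t => hK _ (prod_mk_ne_zero hξ' t)
  have hnorm : ∀ ξ' : EuclideanSpace ℝ (Fin k), ξ' ≠ 0 → ∀ T : L2pos →L[ℂ] L2pos,
      IsTruncMult F (fun ξn => p₀ (ξ', ξn)) T → ‖T‖ = ⨆ ξn, ‖p₀ (ξ', ξn)‖ :=
    fun ξ' hξ' _ hT =>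
      opNorm_eq_iSup_of_isTruncMult hF (continuous_slice hcont hξ') (hbdd ξ' hξ') hT
  refine ⟨fun ξ' hξ' => admissible_slice hcont hhom htrans hξ', hnorm, ?_, ?_⟩
  · intro s hs ξ' hξ' T T' hT hT'
    rw [hnorm _ (smul_ne_zero hs.ne' hξ') T' hT', hnorm ξ' hξ' T hT,
      iSup_norm_slice_smul hhom hs hξ']
  · have : Nonempty (Fin k) := ⟨⟨0, hk⟩⟩
    rw [← sSup_iSup_norm_slice hcont hhom htrans]
    congr 1
    ext r
    constructor
    · rintro ⟨ξ', hξ', T, hT, rfl⟩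
      exact ⟨ξ', hξ', hnorm ξ' hξ' T hT⟩
    · rintro ⟨ξ', hξ', rfl⟩
      have hb : MemLp (fun ξn => p₀ (ξ', ξn)) ∞ volume := memLp_top_of_bound
        (continuous_slice hcont hξ').aestronglyMeasurable K (ae_of_all _ (hbdd ξ' hξ'))
      have hT := isTruncMult_truncMultOp F hb
      exact ⟨ξ', hξ', _, hT, (hnorm ξ' hξ' _ hT).symm⟩

end
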